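/- Let n, p, k be even integers with 0 ≤ k < p−1, p < n and n−p+k > p. Let the group G = ℤ/2 × ℤ/2 act on R(n,p,k) × S¹ × S¹ as follows: the generator (1,0) sends (u, z_1, z_2) to (σ_p(u), −z_1, z_2), where σ_p negates the first p coordinates of u, and the generator (0,1) sends (u, z_1, z_2) to (σ_n(u), z_1, −z_2), where σ_n negates the coordinates u_1,…,u_k and u_{p+1},…,u_n. Then the orbit space (R(n,p,k) × S¹ × S¹)/G is homeomorphic to S^{p−1} × S^{n−p−1} × S¹ × S¹. -/

import Mathlib

open Metric

/-- The intersection of two quadrics in ℝⁿ associated to the polytope `P_k`: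
`u₁² + ⋯ + u_p² = p` and `u₁² + ⋯ + u_k² + u_{p+1}² + ⋯ + u_n² = n - p + k`. -/
def quadR (n p k : ℕ) : Set (EuclideanSpace ℝ (Fin n)) :=
  {u | (∑ j : Fin n, if (j : ℕ) < p then u j ^ 2 else 0) = (p : ℝ) ∧
       (∑ j : Fin n, if (j : ℕ) < k ∨ p ≤ (j : ℕ) then u j ^ 2 else 0) = (n : ℝ) - p + k}

/-- The total space `R(n,p,k) × S¹ × S¹`, with `S¹ ⊂ ℂ` the unit circle. -/
abbrev totalSpace4 (n p k : ℕ) : Type :=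
  {x : EuclideanSpace ℝ (Fin n) × ℂ × ℂ //
    x.1 ∈ quadR n p k ∧ x.2.1 ∈ sphere (0 : ℂ) 1 ∧ x.2.2 ∈ sphere (0 : ℂ) 1}

/-- The generator `(1,0)` of `ℤ/2 × ℤ/2`: `(u, z₁, z₂) ↦ (σ_p u, -z₁, z₂)`,
where `σ_p` negates the first `p` coordinates of `u`. -/
def gen1 (n p : ℕ) : EuclideanSpace ℝ (Fin n) × ℂ × ℂ → EuclideanSpace ℝ (Fin n) × ℂ × ℂ :=
  fun x => (WithLp.toLp 2 (fun j : Fin n => if (j : ℕ) < p then -x.1 j else x.1 j), -x.2.1, x.2.2)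

/-- The generator `(0,1)` of `ℤ/2 × ℤ/2`: `(u, z₁, z₂) ↦ (σ_n u, z₁, -z₂)`,
where `σ_n` negates the coordinates `u₁, …, u_k` and `u_{p+1}, …, u_n`. -/
def gen2 (n p k : ℕ) : EuclideanSpace ℝ (Fin n) × ℂ × ℂ → EuclideanSpace ℝ (Fin n) × ℂ × ℂ :=
  fun x => (WithLp.toLp 2 (fun j : Fin n => if (j : ℕ) < k ∨ p ≤ (j : ℕ) then -x.1 j else x.1 j), x.2.1, -x.2.2)

/-- The orbit relation of the `ℤ/2 × ℤ/2`-action generated by `gen1` and `gen2`. -/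
def orbitRel4 (n p k : ℕ) : totalSpace4 n p k → totalSpace4 n p k → Prop :=
  fun a b => ∃ s₁ s₂ : Bool,
    b.val =
      (cond s₁ (gen1 n p) id) ((cond s₂ (gen2 n p k) id) (a : EuclideanSpace ℝ (Fin n) × ℂ × ℂ))

/-!
Group the coordinates of `ℝⁿ` into consecutive pairs and read each pair as a complex number;
since `k`, `p` and `n` are even, the blocks `[0, k)`, `[k, p)` and `[p, n)` consist of whole
pairs. For fixed `z₁, z₂ ∈ S¹`, dividing the pairs of `u` in the three blocks by `√p z₁ z₂`,
`√p z₁` and `r z₂` respectively, with `r² = n - p + k - (u₁² + ⋯ + u_k²)`, maps `R(n,p,k)`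
bijectively onto `S^{p-1} × S^{n-p-1}`: the two quadric equations say exactly that both images
are unit vectors, and `r` can be read off the image of the first block.
Each generator negates `z₁` or `z₂` together with precisely the pairs divided by it, so
`(u, z₁, z₂) ↦ (v, w, z₁², z₂²)` is constant on orbits; conversely two points with the same
image have `z`'s agreeing up to signs, and after moving one of them by the matching group
element the bijection above shows that they coincide. The orbit space is compact, so the
induced continuous bijection onto a Hausdorff space is a homeomorphism.
-/

open Complex Finset

noncomputable section

lemma nonempty_quot_homeomorph_of_fiber_iff {X Y : Type*} [TopologicalSpace X] [CompactSpace X]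
    [TopologicalSpace Y] [T2Space Y] {r : X → X → Prop} {f : X → Y} (hf : Continuous f)
    (hsurj : Function.Surjective f) (hfib : ∀ a b, f a = f b ↔ r a b) :
    Nonempty (Quot r ≃ₜ Y) := by
  have hr : ∀ a b, r a b → f a = f b := fun a b => (hfib a b).2
  have hinj : Function.Injective (Quot.lift f hr) := by
    rintro ⟨a⟩ ⟨b⟩ hab
    exact Quot.sound ((hfib a b).1 hab)
  have hsurj' : Function.Surjective (Quot.lift f hr) := fun y =>
    (hsurj y).elim fun a ha => ⟨Quot.mk r a, ha⟩
  exact ⟨Continuous.homeoOfEquivCompactToT2 (f := Equiv.ofBijective _ ⟨hinj, hsurj'⟩)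
    (continuous_quot_lift hr hf)⟩

lemma normSq_eq_one_of_mem_sphere {z : ℂ} (hz : z ∈ sphere (0 : ℂ) 1) : normSq z = 1 := by
  rw [normSq_eq_norm_sq, mem_sphere_zero_iff_norm.1 hz, one_pow]

lemma normSq_ofReal_mul (a : ℝ) {w : ℂ} (hw : normSq w = 1) : normSq (a * w) = a ^ 2 := by
  rw [normSq_mul, hw, normSq_ofReal, mul_one, sq]

lemma sq_mem_sphere {z : ℂ} (hz : z ∈ sphere (0 : ℂ) 1) : z ^ 2 ∈ sphere (0 : ℂ) 1 := by
  rw [mem_sphere_zero_iff_norm, norm_pow, mem_sphere_zero_iff_norm.1 hz, one_pow]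

lemma exists_sq_eq_of_mem_sphere {ζ : ℂ} (hζ : ζ ∈ sphere (0 : ℂ) 1) :
    ∃ z ∈ sphere (0 : ℂ) 1, z ^ 2 = ζ := by
  obtain ⟨z, hz⟩ := IsAlgClosed.exists_pow_nat_eq ζ two_pos
  refine ⟨z, ?_, hz⟩
  rw [mem_sphere_zero_iff_norm, ← pow_eq_one_iff_of_nonneg (norm_nonneg z) two_ne_zero,
    ← norm_pow, hz, ← mem_sphere_zero_iff_norm]
  exact hζ

lemma exists_cond_neg_eq_of_sq_eq {z w : ℂ} (h : w ^ 2 = z ^ 2) :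
    ∃ s : Bool, w = cond s (-z) z := by
  rcases sq_eq_sq_iff_eq_or_eq_neg.1 h with h | h
  exacts [⟨false, h⟩, ⟨true, h⟩]

lemma lt_of_div_two_eq {m i j : ℕ} (hm : Even m) (hj : j < m) (hij : i / 2 = j / 2) : i < m := by
  obtain ⟨t, rfl⟩ := hm
  omega

section PairMul

def pairAt (U : ℕ → ℝ) (j : ℕ) : ℂ := ⟨U (2 * (j / 2)), U (2 * (j / 2) + 1)⟩

/-- Multiplies each coordinate pair `(U (2i), U (2i+1))`, read as a complex number,
by `c (2i)`. -/
def pairMul (c : ℕ → ℂ) (U : ℕ → ℝ) (j : ℕ) : ℝ :=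
  if j % 2 = 0 then (c (2 * (j / 2)) * pairAt U j).re else (c (2 * (j / 2)) * pairAt U j).im

lemma pairAt_pairMul (c : ℕ → ℂ) (U : ℕ → ℝ) (j : ℕ) :
    pairAt (pairMul c U) j = c (2 * (j / 2)) * pairAt U j := by
  have h₁ : 2 * (j / 2) % 2 = 0 := by omega
  have h₂ : 2 * ((2 * (j / 2) + 1) / 2) = 2 * (j / 2) := by omega
  apply Complex.ext <;> simp [pairAt, pairMul, h₁, h₂]

lemma pairMul_pairMul (c c' : ℕ → ℂ) (U : ℕ → ℝ) :
    pairMul c (pairMul c' U) = pairMul (c * c') U := by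
  funext j
  simp only [pairMul, pairAt_pairMul, Pi.mul_apply, mul_assoc]

lemma pairMul_apply_congr {c c' : ℕ → ℂ} {U U' : ℕ → ℝ} {j : ℕ}
    (hc : c (2 * (j / 2)) = c' (2 * (j / 2))) (hU : ∀ i, i / 2 = j / 2 → U i = U' i) :
    pairMul c U j = pairMul c' U' j := by
  have hpair : pairAt U j = pairAt U' j := by
    rw [pairAt, pairAt, hU _ (by omega), hU _ (by omega)]
  rw [pairMul, pairMul, hc, hpair]

lemma pairMul_apply_of_eq_ofReal {c : ℕ → ℂ} (U : ℕ → ℝ) {j : ℕ} {a : ℝ}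
    (h : c (2 * (j / 2)) = a) : pairMul c U j = a * U j := by
  simp only [pairMul, pairAt, h]
  rcases Nat.mod_two_eq_zero_or_one j with hj | hj
  · have : 2 * (j / 2) = j := by omega
    simp [hj, this]
  · have : 2 * (j / 2) + 1 = j := by omega
    simp [hj, this]

lemma pairMul_pairMul_inv_apply {c : ℕ → ℂ} (U : ℕ → ℝ) {j : ℕ} (hc : c (2 * (j / 2)) ≠ 0) :
    pairMul c (pairMul c⁻¹ U) j = U j := by
  rw [pairMul_pairMul, pairMul_apply_of_eq_ofReal U (a := 1) (by simp [hc]), one_mul]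

lemma pairMul_inv_pairMul_apply {c : ℕ → ℂ} (U : ℕ → ℝ) {j : ℕ} (hc : c (2 * (j / 2)) ≠ 0) :
    pairMul c⁻¹ (pairMul c U) j = U j := by
  rw [pairMul_pairMul, pairMul_apply_of_eq_ofReal U (a := 1) (by simp [hc]), one_mul]

lemma pairMul_neg_neg (c : ℕ → ℂ) (U : ℕ → ℝ) : pairMul (-c) (-U) = pairMul c U := by
  have hpair : ∀ j, pairAt (-U) j = -pairAt U j := fun j => by
    apply Complex.ext <;> simp [pairAt]
  funext j
  simp only [pairMul, hpair, Pi.neg_apply, neg_mul_neg]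

@[fun_prop]
lemma Continuous.pairMul {X : Type*} [TopologicalSpace X] {c : X → ℕ → ℂ} {U : X → ℕ → ℝ}
    (hc : Continuous c) (hU : Continuous U) : Continuous fun x => pairMul (c x) (U x) := by
  refine continuous_pi fun j => ?_
  have hpair : Continuous fun x => pairAt (U x) j :=
    equivRealProdCLM.symm.continuous.comp
      (((continuous_apply _).comp hU).prodMk ((continuous_apply _).comp hU))
  unfold _root_.pairMul
  split_ifs
  · exact continuous_re.comp (((continuous_apply _).comp hc).mul hpair)
  · exact continuous_im.comp (((continuous_apply _).comp hc).mul hpair)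

end PairMul

section SumSq

def sumSq (m : ℕ) (U : ℕ → ℝ) : ℝ := ∑ j ∈ range m, U j ^ 2

lemma sumSq_congr {m : ℕ} {U U' : ℕ → ℝ} (h : ∀ i < m, U i = U' i) : sumSq m U = sumSq m U' :=
  sum_congr rfl fun i hi => by rw [h i (mem_range.1 hi)]

lemma sumSq_nonneg (m : ℕ) (U : ℕ → ℝ) : 0 ≤ sumSq m U :=
  sum_nonneg fun _ _ => sq_nonneg _

lemma sumSq_mono (U : ℕ → ℝ) {k m : ℕ} (h : k ≤ m) : sumSq k U ≤ sumSq m U :=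
  sum_le_sum_of_subset_of_nonneg (range_subset_range.2 h) fun _ _ _ => sq_nonneg _

lemma sumSq_add (U : ℕ → ℝ) (p m : ℕ) :
    sumSq (p + m) U = sumSq p U + sumSq m (fun i => U (p + i)) :=
  sum_range_add _ p m

lemma sumSq_ite_neg (m : ℕ) (U : ℕ → ℝ) (P : ℕ → Prop) [DecidablePred P] :
    sumSq m (fun j => if P j then -U j else U j) = sumSq m U := by
  simp only [sumSq, apply_ite (· ^ 2), neg_sq, ite_self]

lemma sumSq_two_mul (U : ℕ → ℝ) (h : ℕ) :
    sumSq (2 * h) U = ∑ i ∈ range h, (U (2 * i) ^ 2 + U (2 * i + 1) ^ 2) := by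
  induction h with
  | zero => simp [sumSq]
  | succ h ih =>
    rw [show 2 * (h + 1) = 2 * h + 1 + 1 by ring, sumSq, sum_range_succ, sum_range_succ,
      ← sumSq, ih, sum_range_succ, add_assoc]

lemma sumSq_pairMul {m : ℕ} (hm : Even m) {c : ℕ → ℂ} {a : ℝ}
    (hc : ∀ i < m, normSq (c i) = a) (U : ℕ → ℝ) :
    sumSq m (pairMul c U) = a * sumSq m U := by
  obtain ⟨h, rfl⟩ := hm
  rw [← two_mul, sumSq_two_mul, sumSq_two_mul, mul_sum]
  refine sum_congr rfl fun i hi => ?_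
  have h₁ : 2 * (2 * i / 2) = 2 * i := by omega
  have hpair := congrArg normSq (pairAt_pairMul c U (2 * i))
  rw [normSq_mul, h₁, hc _ (by have := mem_range.1 hi; omega)] at hpair
  simpa [pairAt, h₁, normSq_mk, ← sq] using hpair

@[fun_prop]
lemma continuous_sumSq {m : ℕ} : Continuous (sumSq m) :=
  continuous_finsetSum _ fun j _ => (continuous_apply j).pow 2

end SumSq

section ZeroExtend

variable {m : ℕ}

def zeroExtend (u : EuclideanSpace ℝ (Fin m)) (j : ℕ) : ℝ :=
  if h : j < m then u ⟨j, h⟩ else 0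

def truncVec (m : ℕ) (U : ℕ → ℝ) : EuclideanSpace ℝ (Fin m) :=
  WithLp.toLp 2 fun j => U j

@[simp]
lemma zeroExtend_val (u : EuclideanSpace ℝ (Fin m)) (j : Fin m) : zeroExtend u j = u j := by
  simp [zeroExtend]

@[simp]
lemma truncVec_apply (U : ℕ → ℝ) (j : Fin m) : truncVec m U j = U j := rfl

lemma zeroExtend_truncVec {j : ℕ} (U : ℕ → ℝ) (hj : j < m) :
    zeroExtend (truncVec m U) j = U j := by
  simp [zeroExtend, hj]

lemma sumSq_zeroExtend (u : EuclideanSpace ℝ (Fin m)) : sumSq m (zeroExtend u) = ‖u‖ ^ 2 := by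
  rw [EuclideanSpace.norm_sq_eq, sumSq, ← Fin.sum_univ_eq_sum_range]
  simp

lemma sumSq_zeroExtend_of_mem_sphere {u : EuclideanSpace ℝ (Fin m)} (hu : u ∈ sphere 0 1) :
    sumSq m (zeroExtend u) = 1 := by
  rw [sumSq_zeroExtend, mem_sphere_zero_iff_norm.1 hu, one_pow]

lemma norm_truncVec_sq (U : ℕ → ℝ) : ‖truncVec m U‖ ^ 2 = sumSq m U := by
  rw [EuclideanSpace.norm_sq_eq, sumSq, ← Fin.sum_univ_eq_sum_range]
  simp

lemma truncVec_mem_sphere {U : ℕ → ℝ} (hU : sumSq m U = 1) : truncVec m U ∈ sphere 0 1 := by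
  rw [mem_sphere_zero_iff_norm, ← pow_eq_one_iff_of_nonneg (norm_nonneg _) two_ne_zero,
    norm_truncVec_sq, hU]

lemma sum_ite_sq_eq_sum_filter (u : EuclideanSpace ℝ (Fin m)) (P : ℕ → Prop) [DecidablePred P] :
    (∑ j : Fin m, if P j then u j ^ 2 else 0) = ∑ j ∈ (range m).filter P, zeroExtend u j ^ 2 := by
  rw [sum_filter, ← Fin.sum_univ_eq_sum_range (fun j => if P j then zeroExtend u j ^ 2 else 0)]
  simp

@[fun_prop]
lemma continuous_zeroExtend : Continuous (zeroExtend : EuclideanSpace ℝ (Fin m) → ℕ → ℝ) := by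
  refine continuous_pi fun j => ?_
  unfold zeroExtend
  split_ifs
  · exact PiLp.continuous_apply 2 _ _
  · exact continuous_const

@[fun_prop]
lemma continuous_truncVec : Continuous (truncVec m) :=
  (PiLp.continuous_toLp 2 _).comp (continuous_pi fun _ => continuous_apply _)

end ZeroExtend

variable {n p k : ℕ}

section QuadR

lemma mem_quadR_iff (hkp : k ≤ p) (hpn : p ≤ n) (u : EuclideanSpace ℝ (Fin n)) :
    u ∈ quadR n p k ↔ sumSq p (zeroExtend u) = p ∧
      sumSq k (zeroExtend u) + sumSq (n - p) (fun i => zeroExtend u (p + i)) = n - p + k := by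
  have h₁ : (range n).filter (· < p) = range p := by
    ext j; simp only [mem_filter, mem_range]; omega
  have h₂ : (range n).filter (fun j => j < k ∨ p ≤ j)
      = range k ∪ (range (n - p)).map (addLeftEmbedding p) := by
    ext j; simp only [mem_filter, mem_range, mem_union, mem_map, addLeftEmbedding_apply]
    constructor
    · rintro ⟨hj, hj' | hj'⟩
      · exact Or.inl hj'
      · exact Or.inr ⟨j - p, by omega, by omega⟩
    · rintro (hj | ⟨i, hi, rfl⟩) <;> omega
  have hdisj : Disjoint (range k) ((range (n - p)).map (addLeftEmbedding p)) := by
    rw [disjoint_left]; simp only [mem_range, mem_map, addLeftEmbedding_apply]; omega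
  rw [quadR, Set.mem_ofPred_eq, sum_ite_sq_eq_sum_filter u (· < p),
    sum_ite_sq_eq_sum_filter u (fun j => j < k ∨ p ≤ j), h₁, h₂, sum_union hdisj, sum_map]
  rfl

lemma mem_quadR_congr {u u' : EuclideanSpace ℝ (Fin n)} (h : ∀ j, u' j ^ 2 = u j ^ 2) :
    u' ∈ quadR n p k ↔ u ∈ quadR n p k := by
  simp only [quadR, Set.mem_ofPred_eq, h]

lemma sumSq_le_of_mem_quadR {u : EuclideanSpace ℝ (Fin n)} (hu : u ∈ quadR n p k) (hkp : k ≤ p)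
    (hpn : p ≤ n) : sumSq k (zeroExtend u) ≤ p :=
  (sumSq_mono _ hkp).trans ((mem_quadR_iff hkp hpn u).1 hu).1.le

lemma isCompact_quadR (hkp : k ≤ p) (hpn : p ≤ n) : IsCompact (quadR n p k) := by
  have hset : quadR n p k = {u | sumSq p (zeroExtend u) = p} ∩
      {u | sumSq k (zeroExtend u) + sumSq (n - p) (fun i => zeroExtend u (p + i)) = n - p + k} :=
    Set.ext fun u => mem_quadR_iff hkp hpn u
  refine isCompact_of_isClosed_isBounded ?_ ?_
  · rw [hset]
    exact (isClosed_eq (by fun_prop) continuous_const).inter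
      (isClosed_eq (by fun_prop) continuous_const)
  · refine (isBounded_iff_subset_closedBall 0).2 ⟨√(n + k), fun u hu => ?_⟩
    obtain ⟨h₁, h₂⟩ := (mem_quadR_iff hkp hpn u).1 hu
    have hsplit := sumSq_add (zeroExtend u) p (n - p)
    rw [Nat.add_sub_cancel' hpn] at hsplit
    have hnorm : ‖u‖ ^ 2 ≤ n + k := by
      rw [← sumSq_zeroExtend, hsplit]
      linarith [sumSq_nonneg k (zeroExtend u)]
    rw [mem_closedBall_zero_iff, ← abs_norm]
    exact Real.abs_le_sqrt hnorm

def totalSet (n p k : ℕ) : Set (EuclideanSpace ℝ (Fin n) × ℂ × ℂ) :=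
  {x | x.1 ∈ quadR n p k ∧ x.2.1 ∈ sphere (0 : ℂ) 1 ∧ x.2.2 ∈ sphere (0 : ℂ) 1}

lemma compactSpace_totalSpace4 (hkp : k ≤ p) (hpn : p ≤ n) : CompactSpace (totalSpace4 n p k) :=
  isCompact_iff_compactSpace.1
    ((isCompact_quadR hkp hpn).prod ((isCompact_sphere (0 : ℂ) 1).prod (isCompact_sphere 0 1)))

end QuadR

section Maps

def headCoeff (p k : ℕ) (z₁ z₂ : ℂ) (i : ℕ) : ℂ := √p * if i < k then z₁ * z₂ else z₁

def tailCoeff (n p k : ℕ) (s : ℝ) (z₂ : ℂ) (_ : ℕ) : ℂ := √(n - p + k - s) * z₂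

def headVec (n p k : ℕ) (x : EuclideanSpace ℝ (Fin n) × ℂ × ℂ) : EuclideanSpace ℝ (Fin p) :=
  truncVec p (pairMul (headCoeff p k x.2.1 x.2.2)⁻¹ (zeroExtend x.1))

def tailVec (n p k : ℕ) (x : EuclideanSpace ℝ (Fin n) × ℂ × ℂ) :
    EuclideanSpace ℝ (Fin (n - p)) :=
  truncVec (n - p)
    (pairMul (tailCoeff n p k (sumSq k (zeroExtend x.1)) x.2.2)⁻¹ fun i => zeroExtend x.1 (p + i))

def glueVec (n p k : ℕ) (z₁ z₂ : ℂ) (v : EuclideanSpace ℝ (Fin p))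
    (w : EuclideanSpace ℝ (Fin (n - p))) : EuclideanSpace ℝ (Fin n) :=
  truncVec n fun j => if j < p then pairMul (headCoeff p k z₁ z₂) (zeroExtend v) j
    else pairMul (tailCoeff n p k (p * sumSq k (zeroExtend v)) z₂) (zeroExtend w) (j - p)

lemma normSq_headCoeff {z₁ z₂ : ℂ} (hz₁ : z₁ ∈ sphere (0 : ℂ) 1)
    (hz₂ : z₂ ∈ sphere (0 : ℂ) 1) (i : ℕ) : normSq (headCoeff p k z₁ z₂ i) = p := by
  have hw : normSq (if i < k then z₁ * z₂ else z₁) = 1 := by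
    split_ifs <;>
      simp [normSq_mul, normSq_eq_one_of_mem_sphere hz₁, normSq_eq_one_of_mem_sphere hz₂]
  rw [headCoeff, normSq_ofReal_mul _ hw, Real.sq_sqrt p.cast_nonneg]

lemma headCoeff_ne_zero (hp : 0 < p) {z₁ z₂ : ℂ} (hz₁ : z₁ ∈ sphere (0 : ℂ) 1)
    (hz₂ : z₂ ∈ sphere (0 : ℂ) 1) (i : ℕ) : headCoeff p k z₁ z₂ i ≠ 0 := by
  rw [← normSq_pos, normSq_headCoeff hz₁ hz₂]
  exact_mod_cast hp

lemma normSq_headCoeff_inv {z₁ z₂ : ℂ} (hz₁ : z₁ ∈ sphere (0 : ℂ) 1)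
    (hz₂ : z₂ ∈ sphere (0 : ℂ) 1) (i : ℕ) : normSq ((headCoeff p k z₁ z₂)⁻¹ i) = (p : ℝ)⁻¹ := by
  rw [Pi.inv_apply, normSq_inv, normSq_headCoeff hz₁ hz₂]

lemma normSq_tailCoeff {s : ℝ} (hs : s ≤ p) (h : 2 * p < n + k) {z₂ : ℂ}
    (hz₂ : z₂ ∈ sphere (0 : ℂ) 1) (i : ℕ) :
    normSq (tailCoeff n p k s z₂ i) = n - p + k - s := by
  have : (2 * p : ℝ) < n + k := by exact_mod_cast h
  rw [tailCoeff, normSq_ofReal_mul _ (normSq_eq_one_of_mem_sphere hz₂), Real.sq_sqrt (by linarith)]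

lemma tailCoeff_ne_zero {s : ℝ} (hs : s ≤ p) (h : 2 * p < n + k) {z₂ : ℂ}
    (hz₂ : z₂ ∈ sphere (0 : ℂ) 1) (i : ℕ) : tailCoeff n p k s z₂ i ≠ 0 := by
  have : (2 * p : ℝ) < n + k := by exact_mod_cast h
  rw [← normSq_pos, normSq_tailCoeff hs h hz₂]
  linarith

end Maps

section Forward

variable {x : EuclideanSpace ℝ (Fin n) × ℂ × ℂ}

lemma headVec_mem_sphere (hu : x.1 ∈ quadR n p k) (hz₁ : x.2.1 ∈ sphere (0 : ℂ) 1)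
    (hz₂ : x.2.2 ∈ sphere (0 : ℂ) 1) (hkp : k ≤ p) (hpn : p ≤ n) (hp : 0 < p)
    (hpe : Even p) : headVec n p k x ∈ sphere 0 1 := by
  apply truncVec_mem_sphere
  rw [sumSq_pairMul hpe fun i _ => normSq_headCoeff_inv hz₁ hz₂ i,
    ((mem_quadR_iff hkp hpn _).1 hu).1, inv_mul_cancel₀ (by positivity)]

lemma tailVec_mem_sphere (hu : x.1 ∈ quadR n p k) (hz₂ : x.2.2 ∈ sphere (0 : ℂ) 1)
    (hkp : k ≤ p) (hpn : p ≤ n) (h : 2 * p < n + k) (hnpe : Even (n - p)) :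
    tailVec n p k x ∈ sphere 0 1 := by
  have hs := sumSq_le_of_mem_quadR hu hkp hpn
  have hq := ((mem_quadR_iff hkp hpn _).1 hu).2
  have hc : ∀ i < n - p, normSq ((tailCoeff n p k (sumSq k (zeroExtend x.1)) x.2.2)⁻¹ i)
      = (n - p + k - sumSq k (zeroExtend x.1))⁻¹ := fun i _ => by
    rw [Pi.inv_apply, normSq_inv, normSq_tailCoeff hs h hz₂]
  have hpos : (0 : ℝ) < n - p + k - sumSq k (zeroExtend x.1) := by
    have : (2 * p : ℝ) < n + k := by exact_mod_cast h
    linarith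
  have htail : sumSq (n - p) (fun i => zeroExtend x.1 (p + i))
      = n - p + k - sumSq k (zeroExtend x.1) := by linarith
  apply truncVec_mem_sphere
  rw [sumSq_pairMul hnpe hc, htail, inv_mul_cancel₀ hpos.ne']

lemma glueVec_headVec_tailVec (hu : x.1 ∈ quadR n p k) (hz₁ : x.2.1 ∈ sphere (0 : ℂ) 1)
    (hz₂ : x.2.2 ∈ sphere (0 : ℂ) 1) (hkp : k ≤ p) (hpn : p ≤ n) (hp : 0 < p)
    (h : 2 * p < n + k) (hpe : Even p) (hke : Even k) (hnpe : Even (n - p)) :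
    glueVec n p k x.2.1 x.2.2 (headVec n p k x) (tailVec n p k x) = x.1 := by
  have hhead : ∀ j < p, zeroExtend (headVec n p k x) j
      = pairMul (headCoeff p k x.2.1 x.2.2)⁻¹ (zeroExtend x.1) j := fun j hj =>
    zeroExtend_truncVec _ hj
  have htail : ∀ i < n - p, zeroExtend (tailVec n p k x) i
      = pairMul (tailCoeff n p k (sumSq k (zeroExtend x.1)) x.2.2)⁻¹
          (fun i => zeroExtend x.1 (p + i)) i := fun i hi =>
    zeroExtend_truncVec _ hi
  have hS : p * sumSq k (zeroExtend (headVec n p k x)) = sumSq k (zeroExtend x.1) := by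
    rw [sumSq_congr fun i hi => hhead i (by omega),
      sumSq_pairMul hke fun i _ => normSq_headCoeff_inv hz₁ hz₂ i, ← mul_assoc,
      mul_inv_cancel₀ (by positivity), one_mul]
  ext j
  rw [glueVec, truncVec_apply]
  split_ifs with hj
  · rw [pairMul_apply_congr rfl fun i hi => hhead i (lt_of_div_two_eq hpe hj hi),
      pairMul_pairMul_inv_apply _ (headCoeff_ne_zero hp hz₁ hz₂ _), zeroExtend_val]
  · have hjp : j - p < n - p := by omega
    rw [hS, pairMul_apply_congr rfl fun i hi => htail i (lt_of_div_two_eq hnpe hjp hi),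
      pairMul_pairMul_inv_apply _ (tailCoeff_ne_zero (sumSq_le_of_mem_quadR hu hkp hpn) h hz₂ _),
      Nat.add_sub_cancel' (not_lt.1 hj), zeroExtend_val]

end Forward

section Glue

variable {z₁ z₂ : ℂ} {v : EuclideanSpace ℝ (Fin p)} {w : EuclideanSpace ℝ (Fin (n - p))}

lemma zeroExtend_glueVec_of_lt {j : ℕ} (hj : j < p) (hpn : p ≤ n) :
    zeroExtend (glueVec n p k z₁ z₂ v w) j = pairMul (headCoeff p k z₁ z₂) (zeroExtend v) j := by
  rw [glueVec, zeroExtend_truncVec _ (by omega), if_pos hj]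

lemma zeroExtend_glueVec_add {i : ℕ} (hi : i < n - p) :
    zeroExtend (glueVec n p k z₁ z₂ v w) (p + i)
      = pairMul (tailCoeff n p k (p * sumSq k (zeroExtend v)) z₂) (zeroExtend w) i := by
  rw [glueVec, zeroExtend_truncVec _ (by omega), if_neg (by omega), Nat.add_sub_cancel_left]

lemma sumSq_glueVec (hz₁ : z₁ ∈ sphere (0 : ℂ) 1) (hz₂ : z₂ ∈ sphere (0 : ℂ) 1)
    (hkp : k ≤ p) (hpn : p ≤ n) (hke : Even k) :
    sumSq k (zeroExtend (glueVec n p k z₁ z₂ v w)) = p * sumSq k (zeroExtend v) := by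
  rw [sumSq_congr fun i hi => zeroExtend_glueVec_of_lt (by omega) hpn,
    sumSq_pairMul hke fun i _ => normSq_headCoeff hz₁ hz₂ i]

lemma mul_sumSq_le (hv : v ∈ sphere 0 1) (hkp : k ≤ p) :
    p * sumSq k (zeroExtend v) ≤ p := by
  have := sumSq_mono (zeroExtend v) hkp
  rw [sumSq_zeroExtend_of_mem_sphere hv] at this
  exact mul_le_of_le_one_right p.cast_nonneg this

lemma glueVec_mem_quadR (hv : v ∈ sphere 0 1) (hw : w ∈ sphere 0 1)
    (hz₁ : z₁ ∈ sphere (0 : ℂ) 1) (hz₂ : z₂ ∈ sphere (0 : ℂ) 1) (hkp : k ≤ p)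
    (hpn : p ≤ n) (h : 2 * p < n + k) (hpe : Even p) (hke : Even k) (hnpe : Even (n - p)) :
    glueVec n p k z₁ z₂ v w ∈ quadR n p k := by
  rw [mem_quadR_iff hkp hpn]
  constructor
  · rw [sumSq_congr fun i hi => zeroExtend_glueVec_of_lt hi hpn,
      sumSq_pairMul hpe fun i _ => normSq_headCoeff hz₁ hz₂ i, sumSq_zeroExtend_of_mem_sphere hv,
      mul_one]
  · rw [sumSq_glueVec hz₁ hz₂ hkp hpn hke, sumSq_congr fun i hi => zeroExtend_glueVec_add hi,
      sumSq_pairMul hnpe fun i _ => normSq_tailCoeff (mul_sumSq_le hv hkp) h hz₂ i,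
      sumSq_zeroExtend_of_mem_sphere hw]
    ring

lemma headVec_glueVec (hz₁ : z₁ ∈ sphere (0 : ℂ) 1) (hz₂ : z₂ ∈ sphere (0 : ℂ) 1)
    (hpn : p ≤ n) (hp : 0 < p) (hpe : Even p) :
    headVec n p k (glueVec n p k z₁ z₂ v w, z₁, z₂) = v := by
  ext j
  rw [headVec, truncVec_apply,
    pairMul_apply_congr rfl fun i hi => zeroExtend_glueVec_of_lt (lt_of_div_two_eq hpe j.2 hi) hpn,
    pairMul_inv_pairMul_apply _ (headCoeff_ne_zero hp hz₁ hz₂ _), zeroExtend_val]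

lemma tailVec_glueVec (hv : v ∈ sphere 0 1) (hz₁ : z₁ ∈ sphere (0 : ℂ) 1)
    (hz₂ : z₂ ∈ sphere (0 : ℂ) 1) (hkp : k ≤ p) (hpn : p ≤ n) (h : 2 * p < n + k)
    (hke : Even k) (hnpe : Even (n - p)) :
    tailVec n p k (glueVec n p k z₁ z₂ v w, z₁, z₂) = w := by
  ext j
  rw [tailVec, truncVec_apply, sumSq_glueVec hz₁ hz₂ hkp hpn hke,
    pairMul_apply_congr rfl fun i hi => zeroExtend_glueVec_add (lt_of_div_two_eq hnpe j.2 hi),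
    pairMul_inv_pairMul_apply _ (tailCoeff_ne_zero (mul_sumSq_le hv hkp) h hz₂ _), zeroExtend_val]

end Glue

section Action

variable (x : EuclideanSpace ℝ (Fin n) × ℂ × ℂ)

@[simp]
lemma gen1_snd : (gen1 n p x).2 = (-x.2.1, x.2.2) := rfl

@[simp]
lemma gen2_snd : (gen2 n p k x).2 = (x.2.1, -x.2.2) := rfl

lemma zeroExtend_gen1_fst :
    zeroExtend (gen1 n p x).1 = fun j => if j < p then -zeroExtend x.1 j else zeroExtend x.1 j := by
  funext j
  unfold zeroExtend gen1
  split_ifs <;> simp_all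

lemma zeroExtend_gen2_fst : zeroExtend (gen2 n p k x).1
    = fun j => if j < k ∨ p ≤ j then -zeroExtend x.1 j else zeroExtend x.1 j := by
  funext j
  unfold zeroExtend gen2
  split_ifs <;> simp_all

lemma headCoeff_neg_left (z₁ z₂ : ℂ) : headCoeff p k (-z₁) z₂ = -headCoeff p k z₁ z₂ := by
  funext i
  simp only [headCoeff, Pi.neg_apply]
  split_ifs <;> ring

lemma tailCoeff_neg (s : ℝ) (z₂ : ℂ) : tailCoeff n p k s (-z₂) = -tailCoeff n p k s z₂ := by
  funext i
  simp only [tailCoeff, Pi.neg_apply]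
  ring

lemma headVec_gen1 (hpe : Even p) : headVec n p k (gen1 n p x) = headVec n p k x := by
  ext j
  simp only [headVec, truncVec_apply, gen1_snd, headCoeff_neg_left]
  rw [← pairMul_neg_neg (headCoeff p k x.2.1 x.2.2)⁻¹]
  refine pairMul_apply_congr (by simp) fun i hi => ?_
  rw [zeroExtend_gen1_fst]
  exact if_pos (lt_of_div_two_eq hpe j.2 hi)

lemma headVec_gen2 (hpe : Even p) (hke : Even k) :
    headVec n p k (gen2 n p k x) = headVec n p k x := by
  ext j
  simp only [headVec, truncVec_apply, gen2_snd]
  by_cases hj : (j : ℕ) < k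
  · rw [← pairMul_neg_neg (headCoeff p k x.2.1 x.2.2)⁻¹]
    refine pairMul_apply_congr ?_ fun i hi => ?_
    · have : 2 * (j / 2 : ℕ) < k := by omega
      simp [headCoeff, this]
    · rw [zeroExtend_gen2_fst]
      exact if_pos (Or.inl (lt_of_div_two_eq hke hj hi))
  · refine pairMul_apply_congr ?_ fun i hi => ?_
    · have : ¬2 * (j / 2 : ℕ) < k := by obtain ⟨t, rfl⟩ := hke; omega
      simp [headCoeff, this]
    · have := j.2
      obtain ⟨t, rfl⟩ := hke
      obtain ⟨r, rfl⟩ := hpe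
      rw [zeroExtend_gen2_fst]
      exact if_neg (by omega)

lemma tailVec_gen1 : tailVec n p k (gen1 n p x) = tailVec n p k x := by
  ext j
  simp [tailVec, zeroExtend_gen1_fst, sumSq_ite_neg]

lemma tailVec_gen2 : tailVec n p k (gen2 n p k x) = tailVec n p k x := by
  ext j
  simp only [tailVec, truncVec_apply, gen2_snd, zeroExtend_gen2_fst, sumSq_ite_neg, tailCoeff_neg]
  rw [← pairMul_neg_neg (tailCoeff n p k (sumSq k (zeroExtend x.1)) x.2.2)⁻¹]
  refine pairMul_apply_congr (by simp) fun i _ => ?_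
  simp

variable (s₁ s₂ : Bool)

lemma cond_gen_mem_totalSet (hx : x ∈ totalSet n p k) :
    cond s₁ (gen1 n p) id (cond s₂ (gen2 n p k) id x) ∈ totalSet n p k := by
  have h₁ : ∀ {y}, y ∈ totalSet n p k → gen1 n p y ∈ totalSet n p k := fun hy =>
    ⟨(mem_quadR_congr fun j => by simp [gen1, apply_ite (· ^ 2)]).2 hy.1, by simpa using hy.2.1,
      hy.2.2⟩
  have h₂ : ∀ {y}, y ∈ totalSet n p k → gen2 n p k y ∈ totalSet n p k := fun hy =>
    ⟨(mem_quadR_congr fun j => by simp [gen2, apply_ite (· ^ 2)]).2 hy.1, hy.2.1,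
      by simpa using hy.2.2⟩
  cases s₁ <;> cases s₂
  exacts [hx, h₂ hx, h₁ hx, h₁ (h₂ hx)]

lemma cond_gen_snd :
    (cond s₁ (gen1 n p) id (cond s₂ (gen2 n p k) id x)).2
      = (cond s₁ (-x.2.1) x.2.1, cond s₂ (-x.2.2) x.2.2) := by
  cases s₁ <;> cases s₂ <;> rfl

lemma headVec_cond_gen (hpe : Even p) (hke : Even k) :
    headVec n p k (cond s₁ (gen1 n p) id (cond s₂ (gen2 n p k) id x)) = headVec n p k x := by
  cases s₁ <;> cases s₂ <;> simp [headVec_gen1, headVec_gen2, hpe, hke]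

lemma tailVec_cond_gen :
    tailVec n p k (cond s₁ (gen1 n p) id (cond s₂ (gen2 n p k) id x)) = tailVec n p k x := by
  cases s₁ <;> cases s₂ <;> simp [tailVec_gen1, tailVec_gen2]

end Action

section Orbit

lemma eq_of_headVec_eq_of_tailVec_eq {x y : EuclideanSpace ℝ (Fin n) × ℂ × ℂ}
    (hx : x ∈ totalSet n p k) (hy : y ∈ totalSet n p k) (hkp : k ≤ p) (hpn : p ≤ n) (hp : 0 < p)
    (h : 2 * p < n + k) (hpe : Even p) (hke : Even k) (hnpe : Even (n - p))
    (hhead : headVec n p k x = headVec n p k y) (htail : tailVec n p k x = tailVec n p k y)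
    (hz : x.2 = y.2) : x = y := by
  refine Prod.ext ?_ hz
  calc x.1 = glueVec n p k x.2.1 x.2.2 (headVec n p k x) (tailVec n p k x) :=
        (glueVec_headVec_tailVec hx.1 hx.2.1 hx.2.2 hkp hpn hp h hpe hke hnpe).symm
    _ = glueVec n p k y.2.1 y.2.2 (headVec n p k y) (tailVec n p k y) := by rw [hhead, htail, hz]
    _ = y.1 := glueVec_headVec_tailVec hy.1 hy.2.1 hy.2.2 hkp hpn hp h hpe hke hnpe

lemma continuous_headVec (hp : 0 < p) :
    Continuous fun a : totalSpace4 n p k => headVec n p k a.1 := by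
  have hc : Continuous fun a : totalSpace4 n p k => (headCoeff p k a.1.2.1 a.1.2.2)⁻¹ := by
    refine continuous_pi fun i => Continuous.inv₀ ?_ fun a => headCoeff_ne_zero hp a.2.2.1 a.2.2.2 i
    unfold headCoeff
    split_ifs <;> fun_prop
  unfold headVec
  fun_prop

lemma continuous_tailVec (hkp : k ≤ p) (hpn : p ≤ n) (h : 2 * p < n + k) :
    Continuous fun a : totalSpace4 n p k => tailVec n p k a.1 := by
  have hc : Continuous fun a : totalSpace4 n p k =>
      (tailCoeff n p k (sumSq k (zeroExtend a.1.1)) a.1.2.2)⁻¹ := by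
    refine continuous_pi fun i => Continuous.inv₀ ?_ fun a =>
      tailCoeff_ne_zero (sumSq_le_of_mem_quadR a.2.1 hkp hpn) h a.2.2.2 i
    unfold tailCoeff
    fun_prop
  unfold tailVec
  fun_prop

def orbitMap (hkp : k + 1 < p) (h : 2 * p < n + k) (hne : Even n) (hpe : Even p)
    (a : totalSpace4 n p k) :
    sphere (0 : EuclideanSpace ℝ (Fin p)) 1 ×
      sphere (0 : EuclideanSpace ℝ (Fin (n - p))) 1 ×
      sphere (0 : ℂ) 1 × sphere (0 : ℂ) 1 :=
  (⟨headVec n p k a.1,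
      headVec_mem_sphere a.2.1 a.2.2.1 a.2.2.2 (by omega) (by omega) (by omega) hpe⟩,
   ⟨tailVec n p k a.1,
      tailVec_mem_sphere a.2.1 a.2.2.2 (by omega) (by omega) h (hne.tsub hpe)⟩,
   ⟨a.1.2.1 ^ 2, sq_mem_sphere a.2.2.1⟩, ⟨a.1.2.2 ^ 2, sq_mem_sphere a.2.2.2⟩)

lemma continuous_orbitMap (hkp : k + 1 < p) (h : 2 * p < n + k) (hne : Even n) (hpe : Even p) :
    Continuous (orbitMap hkp h hne hpe) :=
  ((continuous_headVec (by omega)).subtype_mk _).prodMk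
    (((continuous_tailVec (by omega) (by omega) h).subtype_mk _).prodMk
      ((by fun_prop : Continuous fun a : totalSpace4 n p k => a.1.2.1 ^ 2).subtype_mk _ |>.prodMk
        ((by fun_prop : Continuous fun a : totalSpace4 n p k => a.1.2.2 ^ 2).subtype_mk _)))

lemma orbitMap_surjective (hkp : k + 1 < p) (h : 2 * p < n + k) (hne : Even n) (hpe : Even p)
    (hke : Even k) : Function.Surjective (orbitMap hkp h hne hpe) := by
  have hnpe : Even (n - p) := hne.tsub hpe
  rintro ⟨⟨v, hv⟩, ⟨w, hw⟩, ⟨ζ₁, hζ₁⟩, ⟨ζ₂, hζ₂⟩⟩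
  obtain ⟨z₁, hz₁, rfl⟩ := exists_sq_eq_of_mem_sphere hζ₁
  obtain ⟨z₂, hz₂, rfl⟩ := exists_sq_eq_of_mem_sphere hζ₂
  refine ⟨⟨(glueVec n p k z₁ z₂ v w, z₁, z₂),
    glueVec_mem_quadR hv hw hz₁ hz₂ (by omega) (by omega) h hpe hke hnpe, hz₁, hz₂⟩, ?_⟩
  simp only [orbitMap, headVec_glueVec hz₁ hz₂ (by omega : p ≤ n) (by omega) hpe,
    tailVec_glueVec hv hz₁ hz₂ (by omega) (by omega) h hke hnpe]

lemma orbitMap_eq_iff (hkp : k + 1 < p) (h : 2 * p < n + k) (hne : Even n) (hpe : Even p)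
    (hke : Even k) (a b : totalSpace4 n p k) :
    orbitMap hkp h hne hpe a = orbitMap hkp h hne hpe b ↔ orbitRel4 n p k a b := by
  simp only [orbitMap, Prod.mk.injEq, Subtype.mk.injEq]
  constructor
  · rintro ⟨hhead, htail, h₁, h₂⟩
    obtain ⟨s₁, hs₁⟩ := exists_cond_neg_eq_of_sq_eq h₁.symm
    obtain ⟨s₂, hs₂⟩ := exists_cond_neg_eq_of_sq_eq h₂.symm
    refine ⟨s₁, s₂, (eq_of_headVec_eq_of_tailVec_eq (cond_gen_mem_totalSet _ s₁ s₂ a.2) b.2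
      (by omega) (by omega) (by omega) h hpe hke (hne.tsub hpe) ?_ ?_ ?_).symm⟩
    · rw [headVec_cond_gen _ _ _ hpe hke, hhead]
    · rw [tailVec_cond_gen, htail]
    · rw [cond_gen_snd, ← hs₁, ← hs₂]
  · rintro ⟨s₁, s₂, hb⟩
    rw [hb, headVec_cond_gen _ _ _ hpe hke, tailVec_cond_gen, cond_gen_snd]
    cases s₁ <;> cases s₂ <;> simp

end Orbit

end

theorem stmt4_general (n p k : ℕ) (hkp : k + 1 < p) (h : 2 * p < n + k)
    (hne : Even n) (hpe : Even p) (hke : Even k) :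
    Nonempty (Quot (orbitRel4 n p k) ≃ₜ
      sphere (0 : EuclideanSpace ℝ (Fin p)) 1 ×
      sphere (0 : EuclideanSpace ℝ (Fin (n - p))) 1 ×
      sphere (0 : ℂ) 1 × sphere (0 : ℂ) 1) := by
  have := compactSpace_totalSpace4 (n := n) (p := p) (k := k) (by omega) (by omega)
  exact nonempty_quot_homeomorph_of_fiber_iff (continuous_orbitMap hkp h hne hpe)
    (orbitMap_surjective hkp h hne hpe hke) (orbitMap_eq_iff hkp h hne hpe hke)

/-- For even `n, p, k`, the orbit space `(R(n,p,k) × S¹ × S¹)/(ℤ/2 × ℤ/2)` is homeomorphic to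
`S^{p-1} × S^{n-p-1} × S¹ × S¹`. -/
theorem stmt4 (n p k : ℕ) (hkp : k + 1 < p) (hpn : p < n) (h : 2 * p < n + k)
    (hne : Even n) (hpe : Even p) (hke : Even k) :
    Nonempty (Quot (orbitRel4 n p k) ≃ₜ
      sphere (0 : EuclideanSpace ℝ (Fin p)) 1 ×
      sphere (0 : EuclideanSpace ℝ (Fin (n - p))) 1 ×
      sphere (0 : ℂ) 1 × sphere (0 : ℂ) 1) :=
  stmt4_general n p k hkp h hne hpe hke
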